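/- (Key step of Theorem 2.) Let P, I, C be n×n max-plus matrices and λ ∈ ℝ. Fix d ∈ ℕ, and let T_P, T_I, T_C be the d×d matrices defined by (T_P)_{i,i+1}=0, (T_P)_{d,1}=dλ, (T_I)_{i+1,i}=0, (T_I)_{1,d}=-dλ, T_C = identity (all other entries -∞). If for some i and h the diagonal entry ((λP ⊕ λ⁻¹I ⊕ C)^h)_{ii} > 0 (max-plus power, λP means adding λ to all entries of P, λ⁻¹I subtracting λ), then ((((T_P ⊗ᵗ P) ⊕ (T_I ⊗ᵗ I) ⊕ (T_C ⊗ᵗ C))^h)^d)_{ii} > 0. -/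

import Mathlib

/-- Max-plus matrix product over `ℝ̄`. -/
noncomputable def mpMulE {m : Type*} (A : Matrix m m EReal) (B : Matrix m m EReal) :
    Matrix m m EReal :=
  fun i j => ⨆ k, A i k + B k j

/-- Max-plus identity matrix. -/
noncomputable def mpIdE (m : Type*) [DecidableEq m] : Matrix m m EReal :=
  fun i j => if i = j then 0 else ⊥

/-- Max-plus matrix power. -/
noncomputable def mpPowE {m : Type*} [DecidableEq m] (A : Matrix m m EReal) :
    ℕ → Matrix m m EReal
  | 0 => mpIdE m
  | r + 1 => mpMulE A (mpPowE A r)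

/-- The cyclic shift matrix `T_P(λ)` (0-based indices), over `ℝ̄`. -/
noncomputable def TPE (d : ℕ) (lam : ℝ) : Matrix (Fin d) (Fin d) EReal :=
  fun i j => if (i : ℕ) + 1 = (j : ℕ) then 0
    else if (i : ℕ) = d - 1 ∧ (j : ℕ) = 0 then (((d : ℝ) * lam : ℝ) : EReal) else ⊥

/-- The cyclic shift matrix `T_I(λ)` (0-based indices), over `ℝ̄`. -/
noncomputable def TIE (d : ℕ) (lam : ℝ) : Matrix (Fin d) (Fin d) EReal :=
  fun i j => if (j : ℕ) + 1 = (i : ℕ) then 0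
    else if (i : ℕ) = 0 ∧ (j : ℕ) = d - 1 then ((-((d : ℝ) * lam) : ℝ) : EReal) else ⊥

/-!
Give the phases `a : Fin d` the potential `g a = -λa`. On the support of the cyclic shift
matrices, `T_P a b = λ + g b - g a` and `T_I a b = -λ + g b - g a`, so every step `x → y` of
`A = λP ⊕ λ⁻¹I ⊕ C` lifts, from any phase `a`, to a step `(a, x) → (a + s, y)` of the Kronecker
sum `B` of weight at least `A x y + g (a + s) - g a`, with `s ∈ {1, -1, 0}` independent of `a`.
By induction this persists for `A^h` and `B^h`. A closed walk of positive weight `w` at `i` thus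
lifts to a walk `(a, i) → (a + k, i)` in `B^h`; repeating it `d` times returns to the phase `a`,
the potentials telescope away, and the resulting closed walk of `(B^h)^d` has weight `≥ d w > 0`.
-/

section PhaseLift

variable {ι m : Type*}

def IsPhaseLift [Add ι] (g : ι → ℝ) (A : Matrix m m EReal)
    (B : Matrix (ι × m) (ι × m) EReal) : Prop :=
  ∀ x y, ∃ s, ∀ a, A x y + ((g (a + s) - g a : ℝ) : EReal) ≤ B (a, x) (a + s, y)

lemma EReal.add_coe_sub_add_add_coe_sub (u v : EReal) (p q r : ℝ) :
    u + ((q - p : ℝ) : EReal) + (v + ((r - q : ℝ) : EReal)) = u + v + ((r - p : ℝ) : EReal) := by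
  rw [show r - p = (q - p) + (r - q) by ring, EReal.coe_add]
  abel

lemma IsPhaseLift.max [Add ι] {g : ι → ℝ} {A₁ A₂ : Matrix m m EReal}
    {B₁ B₂ : Matrix (ι × m) (ι × m) EReal} (h₁ : IsPhaseLift g A₁ B₁) (h₂ : IsPhaseLift g A₂ B₂) :
    IsPhaseLift g (fun x y => max (A₁ x y) (A₂ x y)) (fun p q => max (B₁ p q) (B₂ p q)) := by
  intro x y
  rcases le_total (A₁ x y) (A₂ x y) with hle | hle
  · obtain ⟨s, hs⟩ := h₂ x y
    exact ⟨s, fun a => by simpa only [max_eq_right hle] using (hs a).trans (le_max_right _ _)⟩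
  · obtain ⟨s, hs⟩ := h₁ x y
    exact ⟨s, fun a => by simpa only [max_eq_left hle] using (hs a).trans (le_max_left _ _)⟩

lemma isPhaseLift_kronecker [Add ι] {g : ι → ℝ} (T : Matrix ι ι EReal) (c : ℝ) (s : ι)
    (hT : ∀ a, ((c + (g (a + s) - g a) : ℝ) : EReal) ≤ T a (a + s)) (P : Matrix m m EReal) :
    IsPhaseLift g (fun x y => (c : EReal) + P x y) (fun p q => T p.1 q.1 + P p.2 q.2) := by
  refine fun x y => ⟨s, fun a => ?_⟩
  dsimp only
  rw [add_right_comm, ← EReal.coe_add]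
  exact add_le_add_left (hT a) _

lemma isPhaseLift_kronecker_mpIdE [AddZeroClass ι] [DecidableEq ι] (g : ι → ℝ)
    (C : Matrix m m EReal) :
    IsPhaseLift g C (fun p q => mpIdE ι p.1 q.1 + C p.2 q.2) :=
  fun x y => ⟨0, fun a => by simp [mpIdE]⟩

variable [DecidableEq ι] [DecidableEq m]

lemma IsPhaseLift.mpPow [AddMonoid ι] [Fintype m] {g : ι → ℝ} {A : Matrix m m EReal}
    {B : Matrix (ι × m) (ι × m) EReal} (hAB : IsPhaseLift g A B) (h : ℕ) :
    IsPhaseLift g (mpPowE A h) (mpPowE B h) := by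
  induction h with
  | zero =>
    intro x y
    refine ⟨0, fun a => ?_⟩
    by_cases hxy : x = y <;> simp [mpPowE, mpIdE, hxy]
  | succ h ih =>
    intro x y
    have : Nonempty m := ⟨x⟩
    obtain ⟨z, hz⟩ := exists_eq_ciSup_of_finite (f := fun z => A x z + mpPowE A h z y)
    obtain ⟨s₁, hs₁⟩ := hAB x z
    obtain ⟨s₂, hs₂⟩ := ih z y
    refine ⟨s₁ + s₂, fun a => ?_⟩
    calc mpPowE A (h + 1) x y + ((g (a + (s₁ + s₂)) - g a : ℝ) : EReal)
        = A x z + ((g (a + s₁) - g a : ℝ) : EReal)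
            + (mpPowE A h z y + ((g (a + s₁ + s₂) - g (a + s₁) : ℝ) : EReal)) := by
          rw [EReal.add_coe_sub_add_add_coe_sub, ← add_assoc, mpPowE, mpMulE, ← hz]
      _ ≤ B (a, x) (a + s₁, z) + mpPowE B h (a + s₁, z) (a + s₁ + s₂, y) :=
          add_le_add (hs₁ a) (hs₂ (a + s₁))
      _ ≤ mpPowE B (h + 1) (a, x) (a + (s₁ + s₂), y) := by
          rw [← add_assoc]
          exact le_iSup (fun q => B (a, x) q + mpPowE B h q (a + s₁ + s₂, y)) (a + s₁, z)

lemma le_mpPowE_of_phase_step [AddMonoid ι] {g : ι → ℝ} {M : Matrix (ι × m) (ι × m) EReal}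
    {x : m} {c : EReal} {k : ι}
    (hM : ∀ a, c + ((g (a + k) - g a : ℝ) : EReal) ≤ M (a, x) (a + k, x)) (r : ℕ) (a : ι) :
    r • c + ((g (a + r • k) - g a : ℝ) : EReal) ≤ mpPowE M r (a, x) (a + r • k, x) := by
  induction r generalizing a with
  | zero => simp [mpPowE, mpIdE]
  | succ r ih =>
    calc (r + 1) • c + ((g (a + (r + 1) • k) - g a : ℝ) : EReal)
        = c + ((g (a + k) - g a : ℝ) : EReal)
            + (r • c + ((g (a + k + r • k) - g (a + k) : ℝ) : EReal)) := by
          rw [EReal.add_coe_sub_add_add_coe_sub]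
          simp only [succ_nsmul', add_assoc]
      _ ≤ M (a, x) (a + k, x) + mpPowE M r (a + k, x) (a + k + r • k, x) :=
          add_le_add (hM a) (ih (a + k))
      _ ≤ mpPowE M (r + 1) (a, x) (a + (r + 1) • k, x) := by
          rw [succ_nsmul', ← add_assoc]
          exact le_iSup (fun q => M (a, x) q + mpPowE M r q (a + k + r • k, x)) (a + k, x)

end PhaseLift

def cyclicPotential (d : ℕ) (lam : ℝ) (a : Fin d) : ℝ := -(lam * (a : ℕ))

lemma TPE_apply_add_one (d : ℕ) (lam : ℝ) (a : Fin (d + 1)) :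
    TPE (d + 1) lam a (a + 1) =
      ((lam + (cyclicPotential (d + 1) lam (a + 1) - cyclicPotential (d + 1) lam a) : ℝ) :
        EReal) := by
  by_cases ha : a = Fin.last d
  · have hsucc : ((a + 1 : Fin (d + 1)) : ℕ) = 0 := by simp [ha]
    have ha' : (a : ℕ) = d := by simp [ha]
    simp only [TPE, cyclicPotential, hsucc, ha']
    rw [if_neg (by omega), if_pos (by simp)]
    congr 1
    push_cast
    ring
  · have hsucc : ((a + 1 : Fin (d + 1)) : ℕ) = a + 1 := by simp [Fin.val_add_one, ha]
    simp only [TPE, cyclicPotential, hsucc, if_true]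
    rw [← EReal.coe_zero]
    congr 1
    push_cast
    ring

lemma TIE_apply_sub_one (d : ℕ) (lam : ℝ) (a : Fin (d + 1)) :
    TIE (d + 1) lam a (a - 1) =
      ((-lam + (cyclicPotential (d + 1) lam (a - 1) - cyclicPotential (d + 1) lam a) : ℝ) :
        EReal) := by
  by_cases ha : a = 0
  · have hpred : ((a - 1 : Fin (d + 1)) : ℕ) = d := by rw [Fin.coe_sub_one, if_pos ha]
    have ha' : (a : ℕ) = 0 := by simp [ha]
    simp only [TIE, cyclicPotential, hpred, ha']
    rw [if_neg (by omega), if_pos (by simp)]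
    congr 1
    push_cast
    ring
  · have ha' : (a : ℕ) ≠ 0 := fun h => ha (Fin.ext h)
    have hpred : ((a - 1 : Fin (d + 1)) : ℕ) = a - 1 := by rw [Fin.coe_sub_one, if_neg ha]
    simp only [TIE, cyclicPotential, hpred]
    rw [if_pos (by omega), ← EReal.coe_zero, Nat.cast_sub (by omega)]
    congr 1
    push_cast
    ring

theorem stmt15_general {n : ℕ} (P I C : Matrix (Fin n) (Fin n) EReal)
    (lam : ℝ) (d : ℕ) (hd : 0 < d) (h : ℕ) (i : Fin n)
    (hpos : 0 < mpPowE
      (fun i j => max ((lam : EReal) + P i j) (max ((-lam : ℝ) + I i j) (C i j))) h i i) :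
    0 < mpPowE
        (mpPowE (fun p q : Fin d × Fin n =>
          max (TPE d lam p.1 q.1 + P p.2 q.2)
            (max (TIE d lam p.1 q.1 + I p.2 q.2) (mpIdE (Fin d) p.1 q.1 + C p.2 q.2))) h)
        d (⟨0, hd⟩, i) (⟨0, hd⟩, i) := by
  obtain ⟨d, rfl⟩ := Nat.exists_eq_add_one_of_ne_zero hd.ne'
  have hlift : IsPhaseLift (cyclicPotential (d + 1) lam)
      (fun i j => max ((lam : EReal) + P i j) (max ((-lam : ℝ) + I i j) (C i j)))
      (fun p q : Fin (d + 1) × Fin n => max (TPE (d + 1) lam p.1 q.1 + P p.2 q.2)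
        (max (TIE (d + 1) lam p.1 q.1 + I p.2 q.2) (mpIdE (Fin (d + 1)) p.1 q.1 + C p.2 q.2))) :=
    (isPhaseLift_kronecker _ lam 1 (fun a => (TPE_apply_add_one d lam a).ge) P).max
      ((isPhaseLift_kronecker _ (-lam) (-1)
        (fun a => by simpa only [← sub_eq_add_neg] using (TIE_apply_sub_one d lam a).ge) I).max
        (isPhaseLift_kronecker_mpIdE _ C))
  obtain ⟨k, hk⟩ := hlift.mpPow h i i
  have hcycle := le_mpPowE_of_phase_step hk (d + 1) 0
  have hdk : (d + 1) • k = 0 := by simpa using card_nsmul_eq_zero (x := k)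
  rw [hdk, add_zero, sub_self, EReal.coe_zero, add_zero] at hcycle
  exact (nsmul_pos hpos d.succ_ne_zero).trans_le hcycle

/-- Key step of Theorem 2: if `((λP ⊕ λ⁻¹I ⊕ C)^h)ᵢᵢ > 0`, then the corresponding
diagonal entry (in the first block) of `(((T_P ⊗ᵗ P) ⊕ (T_I ⊗ᵗ I) ⊕ (T_C ⊗ᵗ C))^h)^d`
is also positive. -/
theorem stmt15 {n : ℕ} (P I C : Matrix (Fin n) (Fin n) EReal)
    (hP : ∀ i j, P i j ≠ ⊤) (hI : ∀ i j, I i j ≠ ⊤) (hC : ∀ i j, C i j ≠ ⊤)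
    (lam : ℝ) (d : ℕ) (hd : 0 < d) (h : ℕ) (i : Fin n)
    (hpos : 0 < mpPowE
      (fun i j => max ((lam : EReal) + P i j) (max ((-lam : ℝ) + I i j) (C i j))) h i i) :
    0 < mpPowE
        (mpPowE (fun p q : Fin d × Fin n =>
          max (TPE d lam p.1 q.1 + P p.2 q.2)
            (max (TIE d lam p.1 q.1 + I p.2 q.2) (mpIdE (Fin d) p.1 q.1 + C p.2 q.2))) h)
        d (⟨0, hd⟩, i) (⟨0, hd⟩, i) :=
  stmt15_general P I C lam d hd h i hpos
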